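/- Let n ≥ 2 and let Φ_D = {±e_j ± e_k : 1 ≤ j < k ≤ n} (all four sign combinations) be the set of roots of type D_n in ℝ^n, with dual lattice M = ℤ^n + ℤ·(1/2, …, 1/2). Let P ⊆ ℝ^n be a lattice polytope cut out by Φ_D: that is, P is the convex hull of a nonempty finite subset of M, and there exist a finite subset S ⊆ Φ_D and real numbers c_v (v ∈ S) with P = {x ∈ ℝ^n : ⟨x, v⟩ ≥ c_v for all v ∈ S}. Then P is normal: for every positive integer m, every point of M lying in the dilate m·P is a sum of m points of M ∩ P. -/

import Mathlib

open Finset Pointwise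

/-- The `i`-th standard basis vector of `ℝ^n`. -/
noncomputable def stdBasis (n : ℕ) (i : Fin n) : Fin n → ℝ := fun j => if j = i then 1 else 0

/-- The standard inner product on `ℝ^n`. -/
noncomputable def innerProd {n : ℕ} (u v : Fin n → ℝ) : ℝ := ∑ i, u i * v i

/-- The roots of type `D_n`: `±e_j ± e_k` for `j < k` (all four sign choices). -/
def typeD (n : ℕ) : Set (Fin n → ℝ) :=
  {v | ∃ j k, j < k ∧ ∃ ε δ : ℝ, (ε = 1 ∨ ε = -1) ∧ (δ = 1 ∨ δ = -1) ∧
    v = ε • stdBasis n j + δ • stdBasis n k}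

/-- The lattice `M = ℤ^n + ℤ·(1/2, …, 1/2) ⊆ ℝ^n`, the union of `ℤ^n` and its translate by
`(1/2, …, 1/2)`. -/
def halfLattice (n : ℕ) : Set (Fin n → ℝ) :=
  {u | (∀ i, ∃ m : ℤ, u i = m) ∨ (∀ i, ∃ m : ℤ, u i = m + 1/2)}

/-!
Write `P = {z | ⌈c_v⌉ ≤ ⟨z, v⟩, v ∈ S}`; the bounds may be rounded up because `⟨u, v⟩ ∈ ℤ` for
every `u ∈ M` and every root `v`. It suffices to split one point `y ∈ M ∩ P` off a lattice point
`x` of `(k + 1)·P`, with `x - y ∈ k·P`. Put `p = x / (k + 1) ∈ P` and pick a vertex `u` lying on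
every facet through `p` (a vertex minimising the sum of their functionals); then round `p - u`
coordinatewise, symmetrically about `0`, to get `y = u + round (p - u)`. As `v = ±e_j ± e_k`,
`⟨y, v⟩` is an integer within `1` of `⟨p, v⟩`, which forces both inequalities on facets not
through `p`; on a facet through `p` the symmetry of the rounding gives `⟨y, v⟩ = ⟨u, v⟩ = ⟨p, v⟩`.
-/

/-- Unlike `round`, which sends `-1/2` to `0` and `1/2` to `1`, this rounding is odd. -/
noncomputable def roundSymm (t : ℝ) : ℤ := if 0 ≤ t then round t else -round (-t)

lemma roundSymm_neg (t : ℝ) : roundSymm (-t) = -roundSymm t := by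
  unfold roundSymm
  rcases lt_trichotomy t 0 with h | rfl | h
  · rw [if_pos (by linarith), if_neg (by linarith)]; ring
  · simp
  · rw [if_neg (by linarith), if_pos h.le, neg_neg]

lemma abs_roundSymm_sub_le (t : ℝ) : |(roundSymm t : ℝ) - t| ≤ 1 / 2 := by
  unfold roundSymm
  split_ifs
  · rw [abs_sub_comm]; exact abs_sub_round t
  · rw [Int.cast_neg, neg_sub_comm]
    exact abs_sub_round (-t)

lemma Int.le_and_le_of_abs_sub_le_one {z a b : ℤ} {t : ℝ} (h : |(z : ℝ) - t| ≤ 1)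
    (ha : (a : ℝ) < t) (hb : t < b) : a ≤ z ∧ z ≤ b := by
  rw [abs_le] at h
  have ha' : (a : ℝ) < z + 1 := by linarith
  have hb' : (z : ℝ) < b + 1 := by linarith
  norm_cast at ha' hb'
  omega

lemma le_and_le_sub_of_abs_sub_div_le_one {k : ℕ} (hk : 0 < k) {a b z : ℤ}
    (hb : (k + 1) * a ≤ b) (hz : |(z : ℝ) - b / (k + 1)| ≤ 1) (htight : b = (k + 1) * a → z = a) :
    a ≤ z ∧ z ≤ b - k * a := by
  rcases hb.eq_or_lt with hb | hb
  · obtain rfl := htight hb.symm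
    constructor <;> linarith
  have hk1 : (0 : ℝ) < k + 1 := by positivity
  have hb' : ((k + 1) * a : ℝ) < b := by exact_mod_cast hb
  refine Int.le_and_le_of_abs_sub_le_one hz ?_ ?_
  · rw [lt_div_iff₀ hk1]; linarith
  · rw [div_lt_iff₀ hk1]; push_cast
    nlinarith [mul_pos (Nat.cast_pos.2 hk : (0 : ℝ) < k) (sub_pos.2 hb')]

lemma innerProd_eq_dotProduct {n : ℕ} (u v : Fin n → ℝ) : innerProd u v = u ⬝ᵥ v := rfl

lemma exists_innerProd_eq_of_mem_typeD {n : ℕ} {v : Fin n → ℝ} (hv : v ∈ typeD n) :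
    ∃ (j k : Fin n) (ε δ : ℝ), (ε = 1 ∨ ε = -1) ∧ (δ = 1 ∨ δ = -1) ∧
      ∀ z, innerProd z v = ε * z j + δ * z k := by
  obtain ⟨j, k, -, ε, δ, hε, hδ, rfl⟩ := hv
  refine ⟨j, k, ε, δ, hε, hδ, fun z => ?_⟩
  have hbasis (i : Fin n) : stdBasis n i = Pi.single i 1 := by
    ext l; simp [stdBasis, Pi.single_apply]
  simp [innerProd_eq_dotProduct, hbasis, dotProduct_add]

lemma sub_mem_halfLattice {n : ℕ} {x y : Fin n → ℝ} (hx : x ∈ halfLattice n)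
    (hy : y ∈ halfLattice n) : x - y ∈ halfLattice n := by
  rcases hx with hx | hx <;> rcases hy with hy | hy <;> choose a ha using hx <;>
    choose b hb using hy
  · exact Or.inl fun i => ⟨a i - b i, by simp [ha, hb]⟩
  · exact Or.inr fun i => ⟨a i - b i - 1, by simp [ha, hb]; ring⟩
  · exact Or.inr fun i => ⟨a i - b i, by simp [ha, hb]; ring⟩
  · exact Or.inl fun i => ⟨a i - b i, by simp [ha, hb]⟩

lemma add_intCast_mem_halfLattice {n : ℕ} {u : Fin n → ℝ} (hu : u ∈ halfLattice n)
    (w : Fin n → ℤ) : (u + fun i => (w i : ℝ)) ∈ halfLattice n := by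
  rcases hu with hu | hu <;> choose a ha using hu
  · exact Or.inl fun i => ⟨a i + w i, by simp [ha]⟩
  · exact Or.inr fun i => ⟨a i + w i, by simp [ha]; ring⟩

lemma exists_intCast_eq_innerProd {n : ℕ} {u v : Fin n → ℝ} (hu : u ∈ halfLattice n)
    (hv : v ∈ typeD n) : ∃ z : ℤ, innerProd u v = z := by
  obtain ⟨j, k, ε, δ, hε, hδ, hv⟩ := exists_innerProd_eq_of_mem_typeD hv
  rw [hv]
  rcases hu with hu | hu <;> obtain ⟨a, ha⟩ := hu j <;> obtain ⟨b, hb⟩ := hu k <;>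
    rw [ha, hb] <;> rcases hε with rfl | rfl <;> rcases hδ with rfl | rfl
  exacts [⟨a + b, by push_cast; ring⟩, ⟨a - b, by push_cast; ring⟩,
    ⟨b - a, by push_cast; ring⟩, ⟨-a - b, by push_cast; ring⟩,
    ⟨a + b + 1, by push_cast; ring⟩, ⟨a - b, by push_cast; ring⟩,
    ⟨b - a, by push_cast; ring⟩, ⟨-a - b - 1, by push_cast; ring⟩]

noncomputable def cosetRound {n : ℕ} (u p : Fin n → ℝ) : Fin n → ℝ :=
  u + fun i => (roundSymm (p i - u i) : ℝ)

section CosetRound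

variable {n : ℕ} {u p v : Fin n → ℝ}

lemma cosetRound_mem_halfLattice (hu : u ∈ halfLattice n) : cosetRound u p ∈ halfLattice n :=
  add_intCast_mem_halfLattice hu _

lemma abs_innerProd_cosetRound_sub_le (hv : v ∈ typeD n) :
    |innerProd (cosetRound u p) v - innerProd p v| ≤ 1 := by
  obtain ⟨j, k, ε, δ, hε, hδ, hv⟩ := exists_innerProd_eq_of_mem_typeD hv
  have habs {σ : ℝ} (hσ : σ = 1 ∨ σ = -1) : |σ| = 1 := by rcases hσ with rfl | rfl <;> norm_num
  set r := p - u
  have hr (i : Fin n) : cosetRound u p i - p i = roundSymm (r i) - r i := by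
    simp only [cosetRound, r, Pi.add_apply, Pi.sub_apply]; ring
  calc |innerProd (cosetRound u p) v - innerProd p v|
      = |ε * (roundSymm (r j) - r j) + δ * (roundSymm (r k) - r k)| := by
        rw [hv, hv, ← hr, ← hr]; congr 1; ring
    _ ≤ |ε * (roundSymm (r j) - r j)| + |δ * (roundSymm (r k) - r k)| := abs_add_le _ _
    _ ≤ 1 / 2 + 1 / 2 := by
      rw [abs_mul, abs_mul, habs hε, habs hδ, one_mul, one_mul]
      exact add_le_add (abs_roundSymm_sub_le _) (abs_roundSymm_sub_le _)
    _ = 1 := by norm_num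

/-- The rounding is odd, so it preserves the vanishing of `⟨p - u, ±e_j ± e_k⟩`. -/
lemma innerProd_cosetRound_eq (hv : v ∈ typeD n) (h : innerProd u v = innerProd p v) :
    innerProd (cosetRound u p) v = innerProd p v := by
  obtain ⟨j, k, ε, δ, hε, hδ, hv⟩ := exists_innerProd_eq_of_mem_typeD hv
  simp only [hv, cosetRound, Pi.add_apply] at h ⊢
  rcases hε with rfl | rfl <;> rcases hδ with rfl | rfl
  · rw [show p j - u j = -(p k - u k) by linarith, roundSymm_neg]; push_cast; linarith
  · rw [show p j - u j = p k - u k by linarith]; linarith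
  · rw [show p j - u j = p k - u k by linarith]; linarith
  · rw [show p j - u j = -(p k - u k) by linarith, roundSymm_neg]; push_cast; linarith

end CosetRound

lemma exists_mem_tight_of_mem_convexHull {E ι : Type*} [AddCommGroup E] [Module ℝ E]
    {V : Set E} {p : E} (hp : p ∈ convexHull ℝ V) (S : Finset ι) (ℓ : ι → E →ₗ[ℝ] ℝ)
    (d : ι → ℝ) (hV : ∀ u ∈ V, ∀ i ∈ S, d i ≤ ℓ i u) :
    ∃ u ∈ V, ∀ i ∈ S, ℓ i p = d i → ℓ i u = d i := by
  classical
  set T := S.filter fun i => ℓ i p = d i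
  obtain ⟨u, huV, hu⟩ := ((∑ i ∈ T, ℓ i).concaveOn convex_univ).exists_le_of_mem_convexHull
    (Set.subset_univ V) hp
  have hle : ∀ i ∈ T, d i ≤ ℓ i u := fun i hi => hV u huV i (mem_filter.1 hi).1
  have hsum : ∑ i ∈ T, d i = ∑ i ∈ T, ℓ i u := by
    refine le_antisymm (sum_le_sum hle) ?_
    calc ∑ i ∈ T, ℓ i u = (∑ i ∈ T, ℓ i) u := (LinearMap.sum_apply _ _ _).symm
      _ ≤ (∑ i ∈ T, ℓ i) p := hu
      _ = ∑ i ∈ T, d i := by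
        rw [LinearMap.sum_apply]
        exact sum_congr rfl fun i hi => (mem_filter.1 hi).2
  exact ⟨u, huV, fun i hi hpi =>
    ((sum_eq_sum_iff_of_le hle).1 hsum i (mem_filter.2 ⟨hi, hpi⟩)).symm⟩
def polyhedron {n : ℕ} (S : Finset (Fin n → ℝ)) (d : (Fin n → ℝ) → ℤ) : Set (Fin n → ℝ) :=
  {z | ∀ v ∈ S, (d v : ℝ) ≤ innerProd z v}

section Polyhedron

variable {n : ℕ} {S : Finset (Fin n → ℝ)}

lemma convex_polyhedron (d : (Fin n → ℝ) → ℤ) : Convex ℝ (polyhedron S d) := by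
  simp only [polyhedron, Set.ofPred_forall]
  exact convex_iInter₂ fun v _ => convex_halfSpace_ge ((dotProductBilin ℝ ℝ).flip v).isLinear _

lemma smul_polyhedron_subset (d : (Fin n → ℝ) → ℤ) (k : ℕ) :
    (k : ℝ) • polyhedron S d ⊆ polyhedron S fun v => k * d v := by
  rintro _ ⟨z, hz, rfl⟩ v hv
  rw [innerProd_eq_dotProduct, smul_dotProduct, smul_eq_mul]
  push_cast
  exact mul_le_mul_of_nonneg_left (hz v hv) k.cast_nonneg

lemma convexHull_eq_polyhedron_ceil {V : Set (Fin n → ℝ)} (hS : ↑S ⊆ typeD n)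
    (hVM : V ⊆ halfLattice n) {c : (Fin n → ℝ) → ℝ}
    (hc : convexHull ℝ V = {x | ∀ v ∈ S, c v ≤ innerProd x v}) :
    convexHull ℝ V = polyhedron S fun v => ⌈c v⌉ := by
  refine (convexHull_min (fun u hu v hv => ?_) (convex_polyhedron _)).antisymm
    fun z hz => hc ▸ fun v hv => (Int.le_ceil _).trans (hz v hv)
  have huc : u ∈ convexHull ℝ V := subset_convexHull ℝ V hu
  rw [hc] at huc
  have hcu : c v ≤ innerProd u v := huc v hv
  obtain ⟨a, ha⟩ := exists_intCast_eq_innerProd (hVM hu) (hS hv)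
  rw [ha] at hcu ⊢
  exact_mod_cast Int.ceil_le.2 hcu

end Polyhedron

section Splitting

variable {n : ℕ} {S : Finset (Fin n → ℝ)} {V : Set (Fin n → ℝ)} {d : (Fin n → ℝ) → ℤ}

lemma exists_sub_mem_polyhedron (hS : ↑S ⊆ typeD n) (hVM : V ⊆ halfLattice n)
    (hV : convexHull ℝ V = polyhedron S d) {k : ℕ} (hk : 0 < k) {x : Fin n → ℝ}
    (hx : x ∈ halfLattice n) (hxk : x ∈ polyhedron S fun v => (k + 1 : ℕ) * d v) :
    ∃ y ∈ halfLattice n, y ∈ convexHull ℝ V ∧ x - y ∈ polyhedron S fun v => k * d v := by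
  set p := ((k : ℝ) + 1)⁻¹ • x
  have hpx (v : Fin n → ℝ) : innerProd p v = innerProd x v / (k + 1) := by
    rw [innerProd_eq_dotProduct, smul_dotProduct, smul_eq_mul, inv_mul_eq_div]; rfl
  have hp : p ∈ polyhedron S d := fun v hv => by
    rw [hpx, le_div_iff₀ (by positivity), mul_comm]
    exact_mod_cast hxk v hv
  obtain ⟨u, huV, hu⟩ := exists_mem_tight_of_mem_convexHull (hV ▸ hp) S
    (fun v => (dotProductBilin ℝ ℝ).flip v) (fun v => d v)
    fun u hu v hv => (hV ▸ subset_convexHull ℝ V hu : u ∈ polyhedron S d) v hv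
  have hyM := cosetRound_mem_halfLattice (p := p) (hVM huV)
  suffices h : ∀ v ∈ S, d v ≤ innerProd (cosetRound u p) v ∧
      innerProd (cosetRound u p) v ≤ innerProd x v - k * d v by
    refine ⟨cosetRound u p, hyM, hV ▸ fun v hv => (h v hv).1, fun v hv => ?_⟩
    have hyx := (h v hv).2
    simp only [innerProd_eq_dotProduct] at hyx ⊢
    push_cast
    linarith [sub_dotProduct x (cosetRound u p) v]
  intro v hv
  obtain ⟨z, hz⟩ := exists_intCast_eq_innerProd hyM (hS hv)
  obtain ⟨b, hb⟩ := exists_intCast_eq_innerProd hx (hS hv)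
  have hdb : (k + 1) * d v ≤ b := by exact_mod_cast hb ▸ hxk v hv
  have htight (hbd : b = (k + 1) * d v) : z = d v := by
    have hpv : innerProd p v = d v := by rw [hpx, hb, hbd]; push_cast; field_simp
    exact_mod_cast hz ▸ (innerProd_cosetRound_eq (hS hv) ((hu v hv hpv).trans hpv.symm)).trans hpv
  have := le_and_le_sub_of_abs_sub_div_le_one hk hdb
    (hz ▸ hb ▸ hpx v ▸ abs_innerProd_cosetRound_sub_le (hS hv)) htight
  rw [hz, hb]
  exact_mod_cast this

theorem exists_fin_sum_eq_of_mem_polyhedron (hS : ↑S ⊆ typeD n) (hVM : V ⊆ halfLattice n)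
    (hV : convexHull ℝ V = polyhedron S d) {m : ℕ} (hm : 0 < m) {x : Fin n → ℝ}
    (hx : x ∈ halfLattice n) (hxm : x ∈ polyhedron S fun v => m * d v) :
    ∃ f : Fin m → (Fin n → ℝ), (∀ j, f j ∈ halfLattice n ∧ f j ∈ convexHull ℝ V) ∧
      x = ∑ j, f j := by
  induction m, hm using Nat.le_induction generalizing x with
  | base => exact ⟨fun _ => x, fun _ => ⟨hx, hV ▸ by simpa using hxm⟩, by simp⟩
  | succ k hk ih =>
    obtain ⟨y, hyM, hyV, hxy⟩ := exists_sub_mem_polyhedron hS hVM hV hk hx hxm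
    obtain ⟨f, hf, hsum⟩ := ih (sub_mem_halfLattice hx hyM) hxy
    refine ⟨Fin.cons y f, Fin.cases ⟨hyM, hyV⟩ hf, ?_⟩
    rw [Fin.sum_cons, ← hsum, add_sub_cancel]

end Splitting

theorem typeD_polytope_normal_general (n : ℕ) (P : Set (Fin n → ℝ))
    (hpoly : ∃ V : Set (Fin n → ℝ), V.Finite ∧ V.Nonempty ∧ V ⊆ halfLattice n ∧
      P = convexHull ℝ V)
    (hcut : ∃ S : Finset (Fin n → ℝ), ↑S ⊆ typeD n ∧ ∃ c : (Fin n → ℝ) → ℝ,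
      P = {x | ∀ v ∈ S, c v ≤ innerProd x v})
    (m : ℕ) (hm : 0 < m) (x : Fin n → ℝ) (hx : x ∈ halfLattice n) (hxm : x ∈ (m : ℝ) • P) :
    ∃ f : Fin m → (Fin n → ℝ), (∀ j, f j ∈ halfLattice n ∧ f j ∈ P) ∧ x = ∑ j, f j := by
  obtain ⟨V, -, -, hVM, rfl⟩ := hpoly
  obtain ⟨S, hS, c, hc⟩ := hcut
  have hV := convexHull_eq_polyhedron_ceil hS hVM hc
  rw [hV] at hxm
  exact exists_fin_sum_eq_of_mem_polyhedron hS hVM hV hm hx (smul_polyhedron_subset _ m hxm)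

/-- Every lattice polytope (with respect to the dual lattice `M = ℤ^n + ℤ·(1/2,…,1/2)` of
the root lattice) cut out by the root system `D_n` is normal: every lattice point of `m·P`
is a sum of `m` lattice points of `P`. -/
theorem typeD_polytope_normal (n : ℕ) (hn : 2 ≤ n) (P : Set (Fin n → ℝ))
    (hpoly : ∃ V : Set (Fin n → ℝ), V.Finite ∧ V.Nonempty ∧ V ⊆ halfLattice n ∧
      P = convexHull ℝ V)
    (hcut : ∃ S : Finset (Fin n → ℝ), ↑S ⊆ typeD n ∧ ∃ c : (Fin n → ℝ) → ℝ,
      P = {x | ∀ v ∈ S, c v ≤ innerProd x v})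
    (m : ℕ) (hm : 0 < m) (x : Fin n → ℝ) (hx : x ∈ halfLattice n) (hxm : x ∈ (m : ℝ) • P) :
    ∃ f : Fin m → (Fin n → ℝ), (∀ j, f j ∈ halfLattice n ∧ f j ∈ P) ∧ x = ∑ j, f j :=
  typeD_polytope_normal_general n P hpoly hcut m hm x hx hxm
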